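/- Let K be Z[q, q^{-1}, s]/(s^2 - 1) and consider the K-module M = K ⊕ (K/(s-1))^{n-1} with generators v_1, ..., v_n (v_1 generating the free summand). Define K-linear endomorphisms rho(sigma_1): v_1 -> -s q v_1, v_2 -> -(1+s) v_1 + v_2, v_j -> v_j for j > 2; and for 2 <= j <= n-1, rho(sigma_j): v_{j-1} -> v_{j-1} - q v_j, v_j -> -q v_j, v_{j+1} -> -v_j + v_{j+1}, v_k -> v_k otherwise; and rho(sigma_n): v_{n-1} -> v_{n-1} - q v_n, v_n -> -q v_n. Then these endomorphisms are invertible and satisfy the type B_n braid relations: rho(sigma_1) rho(sigma_2) rho(sigma_1) rho(sigma_2) = rho(sigma_2) rho(sigma_1) rho(sigma_2) rho(sigma_1), rho(sigma_j) rho(sigma_k) = rho(sigma_k) rho(sigma_j) for |j-k| > 1, and rho(sigma_j) rho(sigma_{j+1}) rho(sigma_j) = rho(sigma_{j+1}) rho(sigma_j) rho(sigma_{j+1}) for j >= 2; hence they define a representation of the type B_n Artin group on M. -/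

import Mathlib

open Finset

/-- The ring `K = ℤ[q, q⁻¹, s]/(s² - 1)`, realised as Laurent polynomials in `q` over
`ℤ[s]/(s² - 1)`. -/
abbrev Kb : Type :=
  LaurentPolynomial (Polynomial ℤ ⧸ Ideal.span {(Polynomial.X : Polynomial ℤ) ^ 2 - 1})

/-- The element `s` of `K`. -/
noncomputable abbrev sK : Kb :=
  LaurentPolynomial.C
    (Ideal.Quotient.mk (Ideal.span {(Polynomial.X : Polynomial ℤ) ^ 2 - 1}) Polynomial.X)

/-- The element `q` of `K`. -/
noncomputable abbrev qK : Kb := LaurentPolynomial.T 1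

/-- The ideal `(s - 1)` of `K`. -/
noncomputable abbrev IqK : Ideal Kb := Ideal.span {sK - 1}

/-- The `K`-module `M = K ⊕ (K/(s-1))^{n-1}`. -/
abbrev Mq (n : ℕ) : Type := Kb × (Fin (n - 1) → Kb ⧸ IqK)

/-- The generators `v_1, ..., v_n` of `M` (indexed by `Fin n`, index `i` standing for
`v_{i+1}`): `v_1` generates the free summand `K`, and `v_{i+1}` is the `i`-th standard
generator of `(K/(s-1))^{n-1}`. -/
noncomputable def genv (n : ℕ) (i : Fin n) : Mq n :=
  if h : i.val = 0 then ((1 : Kb), 0)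
  else (0, Pi.single (⟨i.val - 1, by have := i.isLt; omega⟩ : Fin (n - 1)) (1 : Kb ⧸ IqK))

namespace BB
open LaurentPolynomial

noncomputable abbrev instCRKb : CommRing Kb := inferInstance
attribute [local instance] instCRKb

abbrev Qb : Type := Kb ⧸ IqK

lemma hs2 : sK * sK = 1 := by
  rw [← map_mul, ← map_mul, ← sq]
  rw [show (Ideal.Quotient.mk (Ideal.span {(Polynomial.X : Polynomial ℤ) ^ 2 - 1})
      (Polynomial.X ^ 2)) = Ideal.Quotient.mk _ 1 from
    Ideal.Quotient.eq.mpr (Ideal.subset_span rfl)]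
  simp

lemma sKpow2 : sK ^ 2 = 1 := by rw [sq]; exact hs2
lemma sKpow3 : sK ^ 3 = sK := by rw [pow_succ, sKpow2, one_mul]
lemma sKpow4 : sK ^ 4 = 1 := by rw [show (4:ℕ) = 3 + 1 from rfl, pow_succ, sKpow3, hs2]

lemma hTq : LaurentPolynomial.T (-1) * qK = 1 := by
  rw [← T_add]; norm_num

lemma hu1 : (sK * T (-1)) * (sK * qK) = 1 := by
  linear_combination (T (-1) * qK) * hs2 + hTq

lemma hu2 : (sK * qK) * (sK * T (-1)) = 1 := by rw [mul_comm]; exact hu1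

lemma sQ_smul (z : Qb) : sK • z = z := by
  obtain ⟨a, rfl⟩ := Submodule.Quotient.mk_surjective IqK z
  rw [← Submodule.Quotient.mk_smul, Submodule.Quotient.eq, smul_eq_mul]
  have : sK * a - a = (sK - 1) * a := by ring
  rw [this]
  exact Ideal.mul_mem_right a _ (Ideal.subset_span rfl)

lemma qinv_q (z : Qb) : (T (-1) : Kb) • qK • z = z := by
  rw [← mul_smul, hTq, one_smul]

noncomputable def liftS : Qb →ₗ[Kb] Kb :=
  Submodule.liftQ IqK ((1 + sK) • LinearMap.id) (by
    rw [Ideal.span_le]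
    rintro x rfl
    simp only [SetLike.mem_coe, LinearMap.mem_ker, LinearMap.smul_apply, LinearMap.id_coe, id_eq,
      smul_eq_mul]
    linear_combination hs2)

lemma liftS_mk (a : Kb) : liftS (IqK.mkQ a) = (1 + sK) * a := by
  rw [liftS, Submodule.mkQ_apply, Submodule.liftQ_apply]
  simp [smul_eq_mul]

lemma mkQ_one : IqK.mkQ 1 = (1 : Qb) := rfl

lemma mkQ_liftS (z : Qb) : IqK.mkQ (liftS z) = z + z := by
  obtain ⟨a, rfl⟩ := Submodule.Quotient.mk_surjective IqK z
  rw [← Submodule.mkQ_apply IqK, liftS_mk, ← map_add, Submodule.mkQ_apply, Submodule.mkQ_apply,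
    Submodule.Quotient.eq]
  have : (1 + sK) * a - (a + a) = (sK - 1) * a := by ring
  rw [this]
  exact Ideal.mul_mem_right a _ (Ideal.subset_span rfl)

lemma mkQ_mul (c a : Kb) : IqK.mkQ (c * a) = c • IqK.mkQ a := by
  rw [← smul_eq_mul, map_smul]

lemma sK_mul_liftS (z : Qb) : sK * liftS z = liftS z := by
  obtain ⟨a, rfl⟩ := Submodule.Quotient.mk_surjective IqK z
  rw [← Submodule.mkQ_apply IqK, liftS_mk]
  linear_combination a * hs2

noncomputable def dlow (n p : ℕ) : Mq n →ₗ[Kb] Qb :=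
  if p = 0 then IqK.mkQ.comp (LinearMap.fst Kb Kb _)
  else if h : p - 1 < n - 1 then
    (LinearMap.proj (⟨p - 1, h⟩ : Fin (n - 1))).comp (LinearMap.snd Kb Kb _)
  else 0

noncomputable def dhigh (n p : ℕ) : Mq n →ₗ[Kb] Qb :=
  if h : p + 1 < n - 1 then
    (LinearMap.proj (⟨p + 1, h⟩ : Fin (n - 1))).comp (LinearMap.snd Kb Kb _)
  else 0

noncomputable def rho0 (n : ℕ) : Mq n →ₗ[Kb] Mq n :=
  LinearMap.prod ((-(sK * qK)) • LinearMap.fst Kb Kb _ - liftS ∘ₗ dlow n 1)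
    (LinearMap.snd Kb Kb _)

noncomputable def rho0Inv (n : ℕ) : Mq n →ₗ[Kb] Mq n :=
  LinearMap.prod ((-(sK * T (-1))) • (LinearMap.fst Kb Kb _ + liftS ∘ₗ dlow n 1))
    (LinearMap.snd Kb Kb _)

noncomputable def rhoP (n p : ℕ) : Mq n →ₗ[Kb] Mq n :=
  if h : p < n - 1 then
    LinearMap.prod (LinearMap.fst Kb Kb _)
      (LinearMap.snd Kb Kb _ +
        (LinearMap.single Kb (fun _ : Fin (n-1) => Qb) (⟨p, h⟩ : Fin (n - 1))) ∘ₗ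
        (-(qK • dlow n p) - (qK + 1) •
          ((LinearMap.proj (⟨p, h⟩ : Fin (n - 1))) ∘ₗ (LinearMap.snd Kb Kb _)) - dhigh n p))
  else LinearMap.id

noncomputable def rhoPInv (n p : ℕ) : Mq n →ₗ[Kb] Mq n :=
  if h : p < n - 1 then
    LinearMap.prod (LinearMap.fst Kb Kb _)
      (LinearMap.snd Kb Kb _ +
        (LinearMap.single Kb (fun _ : Fin (n-1) => Qb) (⟨p, h⟩ : Fin (n - 1))) ∘ₗ
        (-(dlow n p) - ((T (-1) : Kb) + 1) •
          ((LinearMap.proj (⟨p, h⟩ : Fin (n - 1))) ∘ₗ (LinearMap.snd Kb Kb _))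
          - (T (-1) : Kb) • dhigh n p))
  else LinearMap.id

lemma rho0_apply (n : ℕ) (v : Mq n) :
    rho0 n v = (-(sK * qK) * v.1 - liftS (dlow n 1 v), v.2) := by
  simp [rho0, smul_eq_mul]

lemma rho0Inv_apply (n : ℕ) (v : Mq n) :
    rho0Inv n v = (-(sK * T (-1)) * v.1 - (sK * T (-1)) * liftS (dlow n 1 v), v.2) := by
  simp [rho0Inv, smul_eq_mul]
  ring

lemma rhoP_apply (n p : ℕ) (h : p < n - 1) (v : Mq n) :
    rhoP n p v = (v.1, v.2 + Pi.single (⟨p, h⟩ : Fin (n - 1))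
      (-(qK • dlow n p v) - (qK + 1) • v.2 ⟨p, h⟩ - dhigh n p v)) := by
  rw [rhoP, dif_pos h]
  simp [LinearMap.single_apply]

lemma rhoPInv_apply (n p : ℕ) (h : p < n - 1) (v : Mq n) :
    rhoPInv n p v = (v.1, v.2 + Pi.single (⟨p, h⟩ : Fin (n - 1))
      (-(dlow n p v) - ((T (-1) : Kb) + 1) • v.2 ⟨p, h⟩ - (T (-1) : Kb) • dhigh n p v)) := by
  rw [rhoPInv, dif_pos h]
  simp [LinearMap.single_apply]

lemma dlow_zero (n : ℕ) (v : Mq n) : dlow n 0 v = IqK.mkQ v.1 := by simp [dlow]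

lemma dlow_in (n p q : ℕ) (hq : q = p + 1) (h : p < n - 1) (v : Mq n) :
    dlow n q v = v.2 ⟨p, h⟩ := by
  subst hq
  rw [dlow, if_neg (by omega), dif_pos (by omega : p + 1 - 1 < n - 1)]
  rfl

lemma dhigh_in (n p : ℕ) (h : p + 1 < n - 1) (v : Mq n) :
    dhigh n p v = v.2 ⟨p + 1, h⟩ := by
  rw [dhigh, dif_pos h]; rfl

lemma dlow_add_single (n p : ℕ) (a : Kb) (y : Fin (n-1) → Qb) (j : Fin (n-1)) (w : Qb) :
    dlow n p (a, y + Pi.single j w) = dlow n p (a, y) + if p = j.val + 1 then w else 0 := by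
  rw [dlow]
  by_cases h1 : p = 0
  · subst h1; simp
  · rw [if_neg h1]
    by_cases h2 : p - 1 < n - 1
    · rw [dif_pos h2]
      simp only [LinearMap.comp_apply, LinearMap.snd_apply, LinearMap.proj_apply, Pi.add_apply,
        Pi.single_apply]
      by_cases h3 : p = j.val + 1
      · rw [if_pos h3, if_pos (show (⟨p - 1, h2⟩ : Fin (n-1)) = j from Fin.ext (by simp; omega))]
      · rw [if_neg h3, if_neg (show ¬(⟨p - 1, h2⟩ : Fin (n-1)) = j from fun he => by
          have := congrArg Fin.val he; simp at this; omega)]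
    · rw [dif_neg h2]
      have := j.isLt
      rw [if_neg (by omega)]
      simp

lemma dlow_fst_irrel (n p : ℕ) (hp : p ≠ 0) (a a' : Kb) (y : Fin (n-1) → Qb) :
    dlow n p (a, y) = dlow n p (a', y) := by
  rw [dlow, if_neg hp]
  by_cases h : p - 1 < n - 1
  · rw [dif_pos h]; rfl
  · rw [dif_neg h]; rfl

lemma dhigh_fst_irrel (n p : ℕ) (a a' : Kb) (y : Fin (n-1) → Qb) :
    dhigh n p (a, y) = dhigh n p (a', y) := by
  rw [dhigh]
  by_cases h : p + 1 < n - 1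
  · rw [dif_pos h]; rfl
  · rw [dif_neg h]; rfl

lemma dhigh_add_single (n p : ℕ) (a : Kb) (y : Fin (n-1) → Qb) (j : Fin (n-1)) (w : Qb) :
    dhigh n p (a, y + Pi.single j w) = dhigh n p (a, y) + if p + 1 = j.val then w else 0 := by
  rw [dhigh]
  by_cases h1 : p + 1 < n - 1
  · rw [dif_pos h1]
    simp only [LinearMap.comp_apply, LinearMap.snd_apply, LinearMap.proj_apply, Pi.add_apply,
      Pi.single_apply]
    by_cases h3 : p + 1 = j.val
    · rw [if_pos h3, if_pos (show (⟨p + 1, h1⟩ : Fin (n-1)) = j from Fin.ext (by simp; omega))]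
    · rw [if_neg h3, if_neg (show ¬(⟨p + 1, h1⟩ : Fin (n-1)) = j from fun he => by
        have := congrArg Fin.val he; simp at this; omega)]
  · rw [dif_neg h1]
    have := j.isLt
    rw [if_neg (by omega)]
    simp

lemma genv_zero (n : ℕ) (k : Fin n) (h : k.val = 0) : genv n k = (1, 0) := by
  rw [genv, dif_pos h]

lemma genv_fst (n : ℕ) (k : Fin n) : (genv n k).1 = if k.val = 0 then 1 else 0 := by
  rw [genv]
  by_cases h : k.val = 0
  · rw [dif_pos h, if_pos h]
  · rw [dif_neg h, if_neg h]

lemma genv_snd (n : ℕ) (k : Fin n) (i : Fin (n-1)) :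
    (genv n k).2 i = if i.val + 1 = k.val then 1 else 0 := by
  rw [genv]
  by_cases h : k.val = 0
  · rw [dif_pos h, if_neg (by omega)]
    rfl
  · rw [dif_neg h]
    simp only [Pi.single_apply]
    by_cases h2 : i.val + 1 = k.val
    · rw [if_pos h2, if_pos (show i = (⟨k.val - 1, by have := k.isLt; omega⟩ : Fin (n-1)) from
        Fin.ext (by simp; omega))]
    · rw [if_neg h2, if_neg (show ¬i = (⟨k.val - 1, by have := k.isLt; omega⟩ : Fin (n-1)) from
        fun he => by have := congrArg Fin.val he; simp at this; omega)]

lemma dlow_genv (n p : ℕ) (k : Fin n) :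
    dlow n p (genv n k) = if p = k.val then 1 else 0 := by
  by_cases h1 : p = 0
  · subst h1
    rw [dlow, if_pos rfl]
    simp only [LinearMap.comp_apply, LinearMap.fst_apply, genv_fst]
    by_cases h : k.val = 0
    · rw [if_pos h, if_pos h.symm]; rfl
    · rw [if_neg h, if_neg (by omega)]
      exact map_zero _
  · rw [dlow, if_neg h1]
    by_cases h2 : p - 1 < n - 1
    · rw [dif_pos h2]
      simp only [LinearMap.comp_apply, LinearMap.snd_apply, LinearMap.proj_apply, genv_snd]
      by_cases h3 : p = k.val
      · rw [if_pos (by omega : p - 1 + 1 = k.val), if_pos h3]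
      · rw [if_neg (by omega : ¬p - 1 + 1 = k.val), if_neg h3]
    · rw [dif_neg h2]
      have := k.isLt
      rw [if_neg (by omega)]
      simp

lemma dhigh_genv (n p : ℕ) (k : Fin n) :
    dhigh n p (genv n k) = if p + 2 = k.val then 1 else 0 := by
  rw [dhigh]
  by_cases h1 : p + 1 < n - 1
  · rw [dif_pos h1]
    simp only [LinearMap.comp_apply, LinearMap.snd_apply, LinearMap.proj_apply, genv_snd]
  · rw [dif_neg h1]
    have := k.isLt
    rw [if_neg (by omega)]
    simp

/-! ### action on generators -/

lemma rho0_genv_zero (n : ℕ) (hn : 2 ≤ n) (i : Fin n) (hi : i.val = 0) :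
    rho0 n (genv n i) = -((sK * qK) • genv n i) := by
  rw [genv_zero n i hi, rho0_apply, dlow_in n 0 1 rfl (by omega)]
  simp [Prod.smul_mk]

lemma rho0_genv_one (n : ℕ) (hn : 2 ≤ n) (i j : Fin n) (hi : i.val = 0) (hj : j.val = 1) :
    rho0 n (genv n j) = -((1 + sK) • genv n i) + genv n j := by
  rw [genv_zero n i hi, rho0_apply, dlow_genv, if_pos (by omega : 1 = j.val),
    ← mkQ_one, liftS_mk, mul_one]
  refine Prod.ext ?_ ?_
  · simp [genv_fst, hj]
  · simp

lemma rho0_genv_other (n : ℕ) (j : Fin n) (hj : 2 ≤ j.val) :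
    rho0 n (genv n j) = genv n j := by
  rw [rho0_apply, dlow_genv, if_neg (by omega), map_zero]
  refine Prod.ext ?_ rfl
  simp [genv_fst, show ¬j.val = 0 by omega]

lemma rhoP_genv_low (n p : ℕ) (h : p < n - 1) (j k : Fin n) (hj : j.val = p + 1)
    (hk : k.val = p) :
    rhoP n p (genv n k) = genv n k - qK • genv n j := by
  rw [rhoP_apply n p h]
  refine Prod.ext ?_ ?_
  · simp [genv_fst, hj]
  · funext i
    simp [Pi.single_apply, genv_snd, dlow_genv, dhigh_genv, hj, hk, Fin.ext_iff]
    split_ifs <;> first | omega | module | simp | skip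
    all_goals module

lemma rhoP_genv_self (n p : ℕ) (h : p < n - 1) (j : Fin n) (hj : j.val = p + 1) :
    rhoP n p (genv n j) = -(qK • genv n j) := by
  rw [rhoP_apply n p h]
  refine Prod.ext ?_ ?_
  · simp [genv_fst, hj]
  · funext i
    simp [Pi.single_apply, genv_snd, dlow_genv, dhigh_genv, hj, Fin.ext_iff]
    split_ifs <;> first | omega | module | simp | skip
    all_goals module

lemma rhoP_genv_high (n p : ℕ) (h : p < n - 1) (j k : Fin n) (hj : j.val = p + 1)
    (hk : k.val = p + 2) :
    rhoP n p (genv n k) = -(genv n j) + genv n k := by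
  rw [rhoP_apply n p h]
  refine Prod.ext ?_ ?_
  · simp [genv_fst, hj, hk]
  · funext i
    simp [Pi.single_apply, genv_snd, dlow_genv, dhigh_genv, hj, hk, Fin.ext_iff]
    split_ifs <;> first | omega | module | simp | skip
    all_goals module

lemma rhoP_genv_other (n p : ℕ) (h : p < n - 1) (k : Fin n) (h1 : k.val ≠ p)
    (h2 : k.val ≠ p + 1) (h3 : k.val ≠ p + 2) :
    rhoP n p (genv n k) = genv n k := by
  rw [rhoP_apply n p h, dlow_genv, if_neg (show ¬ p = k.val by omega)]
  rw [dhigh_genv, if_neg (show ¬ p + 2 = k.val by omega)]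
  rw [genv_snd, if_neg (show ¬ (⟨p, h⟩ : Fin (n-1)).val + 1 = k.val by simp; omega)]
  refine Prod.ext rfl ?_
  simp

lemma braidHigh (n p : ℕ) (hp : p + 2 < n) :
    rhoP n p ∘ₗ rhoP n (p+1) ∘ₗ rhoP n p = rhoP n (p+1) ∘ₗ rhoP n p ∘ₗ rhoP n (p+1) := by
  have h1 : p < n - 1 := by omega
  have h2 : p + 1 < n - 1 := by omega
  apply LinearMap.ext
  intro v
  simp only [LinearMap.comp_apply, rhoP_apply n p h1, rhoP_apply n (p+1) h2,
    dlow_add_single, dhigh_add_single, Pi.add_apply, Pi.single_apply, Fin.mk.injEq,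
    Prod.mk.eta, dlow_in n p (p+1) rfl h1, dhigh_in n p h2, if_true]
  split_ifs <;> try omega
  refine Prod.ext rfl ?_
  funext i
  simp only [Pi.add_apply, Pi.single_apply, Fin.ext_iff, Fin.val_mk]
  split_ifs <;> first | omega | module
lemma rhoP_id (n p : ℕ) (h : ¬ p < n - 1) : rhoP n p = LinearMap.id := by
  rw [rhoP, dif_neg h]

lemma commP (n p p' : ℕ) (hpp : p + 2 ≤ p') :
    rhoP n p ∘ₗ rhoP n p' = rhoP n p' ∘ₗ rhoP n p := by
  by_cases hlt : p' < n - 1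
  · have h1 : p < n - 1 := by omega
    apply LinearMap.ext
    intro v
    simp only [LinearMap.comp_apply, rhoP_apply n p h1, rhoP_apply n p' hlt,
      dlow_add_single, dhigh_add_single, Pi.add_apply, Pi.single_apply, Fin.mk.injEq,
      Prod.mk.eta, if_true]
    split_ifs <;> try omega
    refine Prod.ext rfl ?_
    funext i
    simp only [Pi.add_apply, Pi.single_apply, Fin.ext_iff, Fin.val_mk]
    split_ifs <;> first | omega | module
  · rw [rhoP_id n p' hlt, LinearMap.id_comp, LinearMap.comp_id]

lemma comm0P (n p : ℕ) (hp : 1 ≤ p) :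
    rho0 n ∘ₗ rhoP n p = rhoP n p ∘ₗ rho0 n := by
  by_cases hlt : p < n - 1
  · have hul1 : ∀ (a : Kb) (y : Fin (n-1) → Qb), dlow n 1 (a, y) = y ⟨0, by omega⟩ := by
      intro a y
      rw [dlow, if_neg (by omega), dif_pos (by omega : 1 - 1 < n - 1)]
      rfl
    have hulp : ∀ (a : Kb) (y : Fin (n-1) → Qb), dlow n p (a, y) = y ⟨p - 1, by omega⟩ := by
      intro a y
      rw [dlow, if_neg (by omega), dif_pos (by omega : p - 1 < n - 1)]
      rfl
    have huhp : ∀ (a : Kb) (y : Fin (n-1) → Qb), dhigh n p (a, y) =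
        if h : p + 1 < n - 1 then y ⟨p + 1, h⟩ else 0 := by
      intro a y
      rw [dhigh]
      by_cases h : p + 1 < n - 1
      · rw [dif_pos h, dif_pos h]; rfl
      · rw [dif_neg h, dif_neg h]; rfl
    apply LinearMap.ext
    intro v
    simp only [LinearMap.comp_apply, rho0_apply, rhoP_apply n p hlt, hul1, hulp, huhp,
      Pi.add_apply, Pi.single_apply, Fin.mk.injEq, Prod.mk.eta, if_true]
    split_ifs <;> first | omega | simp
  · rw [rhoP_id n p hlt, LinearMap.id_comp, LinearMap.comp_id]
lemma rho0_left_inv (n : ℕ) : rho0Inv n ∘ₗ rho0 n = LinearMap.id := by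
  apply LinearMap.ext
  intro v
  rw [LinearMap.comp_apply, rho0_apply, rho0Inv_apply, LinearMap.id_apply]
  rw [show dlow n 1 (-(sK * qK) * v.1 - liftS (dlow n 1 v), v.2) = dlow n 1 (v.1, v.2) from
    dlow_fst_irrel n 1 (by omega) _ _ _, Prod.mk.eta]
  refine Prod.ext ?_ rfl
  dsimp only
  linear_combination v.1 * hu1

lemma rho0_right_inv (n : ℕ) : rho0 n ∘ₗ rho0Inv n = LinearMap.id := by
  apply LinearMap.ext
  intro v
  rw [LinearMap.comp_apply, rho0Inv_apply, rho0_apply, LinearMap.id_apply]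
  rw [show dlow n 1 (-(sK * T (-1)) * v.1 - sK * T (-1) * liftS (dlow n 1 v), v.2)
      = dlow n 1 (v.1, v.2) from dlow_fst_irrel n 1 (by omega) _ _ _, Prod.mk.eta]
  refine Prod.ext ?_ rfl
  dsimp only
  linear_combination (v.1 + liftS (dlow n 1 v)) * hu2

lemma rhoPInv_id (n p : ℕ) (h : ¬ p < n - 1) : rhoPInv n p = LinearMap.id := by
  rw [rhoPInv, dif_neg h]

lemma rhoP_left_inv (n p : ℕ) : rhoPInv n p ∘ₗ rhoP n p = LinearMap.id := by
  by_cases hlt : p < n - 1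
  · apply LinearMap.ext
    intro v
    simp only [LinearMap.comp_apply, rhoP_apply n p hlt, rhoPInv_apply n p hlt,
      dlow_add_single, dhigh_add_single, Pi.add_apply, Pi.single_apply, Fin.mk.injEq,
      Prod.mk.eta, if_true, LinearMap.id_apply]
    split_ifs <;> try omega
    refine Prod.ext rfl ?_
    dsimp only
    funext i
    simp only [Pi.add_apply, Pi.single_apply]
    split_ifs with hif
    case neg => simp
    rw [hif, add_assoc, add_eq_left]
    match_scalars <;>
      first
        | ring1
        | linear_combination hTq
        | linear_combination (T (-1) : Kb) * hTq
        | linear_combination qK * hTq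
        | linear_combination ((T (-1) : Kb) + 1) * hTq
        | linear_combination (qK + 1) * hTq
        | linear_combination (-(T (-1) : Kb)) * hTq
        | linear_combination (-qK) * hTq
        | linear_combination (-1 : Kb) * hTq
  · rw [rhoP_id n p hlt, rhoPInv_id n p hlt, LinearMap.id_comp]

lemma rhoP_right_inv (n p : ℕ) : rhoP n p ∘ₗ rhoPInv n p = LinearMap.id := by
  by_cases hlt : p < n - 1
  · apply LinearMap.ext
    intro v
    simp only [LinearMap.comp_apply, rhoP_apply n p hlt, rhoPInv_apply n p hlt,
      dlow_add_single, dhigh_add_single, Pi.add_apply, Pi.single_apply, Fin.mk.injEq,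
      Prod.mk.eta, if_true, LinearMap.id_apply]
    split_ifs <;> try omega
    refine Prod.ext rfl ?_
    dsimp only
    funext i
    simp only [Pi.add_apply, Pi.single_apply]
    split_ifs with hif
    case neg => simp
    rw [hif, add_assoc, add_eq_left]
    match_scalars <;>
      first
        | ring1
        | linear_combination hTq
        | linear_combination (T (-1) : Kb) * hTq
        | linear_combination qK * hTq
        | linear_combination ((T (-1) : Kb) + 1) * hTq
        | linear_combination (qK + 1) * hTq
        | linear_combination (-(T (-1) : Kb)) * hTq
        | linear_combination (-qK) * hTq
        | linear_combination (-1 : Kb) * hTq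
  · rw [rhoP_id n p hlt, rhoPInv_id n p hlt, LinearMap.id_comp]
set_option maxHeartbeats 3200000 in
lemma braid01 (n : ℕ) (hn : 2 ≤ n) :
    rho0 n ∘ₗ rhoP n 0 ∘ₗ rho0 n ∘ₗ rhoP n 0 = rhoP n 0 ∘ₗ rho0 n ∘ₗ rhoP n 0 ∘ₗ rho0 n := by
  have h0 : 0 < n - 1 := by omega
  by_cases hn1 : 1 < n - 1
  · have hdh : ∀ (a : Kb) (y : Fin (n-1) → Qb), dhigh n 0 (a, y) = y ⟨1, hn1⟩ := by
      intro a y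
      rw [dhigh, dif_pos (by omega : 0 + 1 < n - 1)]
      rfl
    apply LinearMap.ext
    intro v
    obtain ⟨x, y⟩ := v
    simp only [LinearMap.comp_apply, rho0_apply, rhoP_apply n 0 h0, dlow_zero,
      dlow_add_single, dhigh_add_single, dlow_in n 0 1 rfl h0, hdh,
      Pi.add_apply, Pi.single_apply, Fin.mk.injEq, Prod.mk.eta, if_true, if_false]
    split_ifs <;> first | omega | contradiction | skip
    obtain ⟨b0, hb0⟩ : ∃ b0, IqK.mkQ b0 = y ⟨0, h0⟩ :=
      Submodule.Quotient.mk_surjective _ _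
    obtain ⟨c0, hc0⟩ : ∃ c0, IqK.mkQ c0 = y ⟨1, hn1⟩ :=
      Submodule.Quotient.mk_surjective _ _
    rw [← hb0, ← hc0]
    simp only [map_add, map_sub, map_neg, map_smul, mkQ_mul, mkQ_liftS, liftS_mk, mul_smul,
      sQ_smul, smul_eq_mul, smul_add, smul_sub, smul_neg, neg_smul, add_smul, one_smul, add_zero, zero_add]
    refine Prod.ext ?_ ?_
    · dsimp only
      ring_nf
      simp only [sKpow2, sKpow3, sKpow4, one_mul, mul_one]
      ring_nf
    · dsimp only
      funext i
      simp only [Pi.add_apply, Pi.single_apply]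
      split_ifs with hif
      case neg => simp
      rw [hif, ← hb0]
      module
  · have hdh : ∀ (a : Kb) (y : Fin (n-1) → Qb), dhigh n 0 (a, y) = 0 := by
      intro a y
      rw [dhigh, dif_neg (by omega : ¬ 0 + 1 < n - 1)]
      rfl
    apply LinearMap.ext
    intro v
    obtain ⟨x, y⟩ := v
    simp only [LinearMap.comp_apply, rho0_apply, rhoP_apply n 0 h0, dlow_zero,
      dlow_add_single, dhigh_add_single, dlow_in n 0 1 rfl h0, hdh,
      Pi.add_apply, Pi.single_apply, Fin.mk.injEq, Prod.mk.eta, if_true, if_false]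
    split_ifs <;> first | omega | contradiction | skip
    obtain ⟨b0, hb0⟩ : ∃ b0, IqK.mkQ b0 = y ⟨0, h0⟩ :=
      Submodule.Quotient.mk_surjective _ _
    rw [← hb0]
    simp only [map_add, map_sub, map_neg, map_smul, map_zero, mkQ_mul, mkQ_liftS, liftS_mk,
      mul_smul, sQ_smul, smul_eq_mul, smul_add, smul_sub, smul_neg, neg_smul, add_smul, one_smul,
      smul_zero, add_zero, zero_add, sub_zero]
    refine Prod.ext ?_ ?_
    · dsimp only
      ring_nf
      simp only [sKpow2, sKpow3, sKpow4, one_mul, mul_one]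
      ring_nf
    · dsimp only
      funext i
      simp only [Pi.add_apply, Pi.single_apply]
      split_ifs with hif
      case neg => simp
      rw [hif, ← hb0]
      module

noncomputable def rho (n : ℕ) (j : Fin n) : Mq n →ₗ[Kb] Mq n :=
  if j.val = 0 then rho0 n else rhoP n (j.val - 1)

lemma rho_zero (n : ℕ) (j : Fin n) (h : j.val = 0) : rho n j = rho0 n := if_pos h

lemma rho_pos (n : ℕ) (j : Fin n) (h : j.val ≠ 0) : rho n j = rhoP n (j.val - 1) := if_neg h

end BB

/-- The Burau-type representation of the type `B_n` Artin group on
`M = K ⊕ (K/(s-1))^{n-1}`, `K = ℤ[q,q⁻¹,s]/(s²-1)`: there are `K`-linear endomorphisms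
`ρ(σ_1), ..., ρ(σ_n)` of `M` given on the generators `v_1, ..., v_n` by
`ρ(σ_1): v_1 ↦ -sq·v_1, v_2 ↦ -(1+s)·v_1 + v_2, v_j ↦ v_j (j > 2)`;
`ρ(σ_j) (2 ≤ j ≤ n-1): v_{j-1} ↦ v_{j-1} - q·v_j, v_j ↦ -q·v_j, v_{j+1} ↦ -v_j + v_{j+1},
v_k ↦ v_k otherwise`;
`ρ(σ_n): v_{n-1} ↦ v_{n-1} - q·v_n, v_n ↦ -q·v_n, v_k ↦ v_k otherwise`;
moreover these endomorphisms are invertible and satisfy the type `B_n` braid relations,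
hence define a representation of the type `B_n` Artin group on `M`. -/
theorem typeB_burau_representation (n : ℕ) (hn : 2 ≤ n) :
    ∃ ρ : Fin n → (Mq n →ₗ[Kb] Mq n),
      -- the formulas for ρ(σ_1)
      (∀ i : Fin n, i.val = 0 →
        ρ i (genv n i) = -((sK * qK) • genv n i) ∧
        (∀ j : Fin n, j.val = 1 →
          ρ i (genv n j) = -((1 + sK) • genv n i) + genv n j) ∧
        (∀ j : Fin n, 2 ≤ j.val → ρ i (genv n j) = genv n j)) ∧
      -- the formulas for ρ(σ_j), 2 ≤ j ≤ n-1
      (∀ j : Fin n, 1 ≤ j.val → j.val + 1 < n → ∀ k : Fin n,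
        (k.val + 1 = j.val → ρ j (genv n k) = genv n k - qK • genv n j) ∧
        (k = j → ρ j (genv n k) = -(qK • genv n j)) ∧
        (k.val = j.val + 1 → ρ j (genv n k) = -(genv n j) + genv n k) ∧
        (k.val + 1 ≠ j.val → k ≠ j → k.val ≠ j.val + 1 → ρ j (genv n k) = genv n k)) ∧
      -- the formulas for ρ(σ_n)
      (∀ j : Fin n, j.val + 1 = n → 1 ≤ j.val → ∀ k : Fin n,
        (k.val + 1 = j.val → ρ j (genv n k) = genv n k - qK • genv n j) ∧
        (k = j → ρ j (genv n k) = -(qK • genv n j)) ∧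
        (k.val + 1 ≠ j.val → k ≠ j → ρ j (genv n k) = genv n k)) ∧
      -- invertibility
      (∀ j : Fin n, Function.Bijective (ρ j)) ∧
      -- the type B braid relation between σ_1 and σ_2
      (∀ i j : Fin n, i.val = 0 → j.val = 1 →
        ρ i ∘ₗ ρ j ∘ₗ ρ i ∘ₗ ρ j = ρ j ∘ₗ ρ i ∘ₗ ρ j ∘ₗ ρ i) ∧
      -- the commutation relations
      (∀ j k : Fin n, 1 < Nat.dist j.val k.val → ρ j ∘ₗ ρ k = ρ k ∘ₗ ρ j) ∧
      -- the braid relations for j ≥ 2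
      (∀ j k : Fin n, 1 ≤ j.val → k.val = j.val + 1 →
        ρ j ∘ₗ ρ k ∘ₗ ρ j = ρ k ∘ₗ ρ j ∘ₗ ρ k) := by
  classical
  refine ⟨BB.rho n, ?_, ?_, ?_, ?_, ?_, ?_, ?_⟩
  · -- formulas for σ₁
    intro i hi
    rw [BB.rho_zero n i hi]
    exact ⟨BB.rho0_genv_zero n hn i hi, fun j hj => BB.rho0_genv_one n hn i j hi hj,
      fun j hj => BB.rho0_genv_other n j hj⟩
  · -- formulas for middle σⱼ
    intro j h1 h2 k
    rw [BB.rho_pos n j (by omega)]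
    refine ⟨?_, ?_, ?_, ?_⟩
    · intro hk
      exact BB.rhoP_genv_low n (j.val - 1) (by omega) j k (by omega) (by omega)
    · intro hk
      subst hk
      exact BB.rhoP_genv_self n (k.val - 1) (by omega) k (by omega)
    · intro hk
      exact BB.rhoP_genv_high n (j.val - 1) (by omega) j k (by omega) (by omega)
    · intro h3 h4 h5
      have h4' : k.val ≠ j.val := fun he => h4 (Fin.ext he)
      exact BB.rhoP_genv_other n (j.val - 1) (by omega) k (by omega) (by omega) (by omega)
  · -- formulas for σₙ
    intro j hj h1 k
    have hk' := k.isLt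
    rw [BB.rho_pos n j (by omega)]
    refine ⟨?_, ?_, ?_⟩
    · intro hk
      exact BB.rhoP_genv_low n (j.val - 1) (by omega) j k (by omega) (by omega)
    · intro hk
      subst hk
      exact BB.rhoP_genv_self n (k.val - 1) (by omega) k (by omega)
    · intro h3 h4
      have h4' : k.val ≠ j.val := fun he => h4 (Fin.ext he)
      exact BB.rhoP_genv_other n (j.val - 1) (by omega) k (by omega) (by omega) (by omega)
  · -- invertibility
    intro j
    by_cases hj : j.val = 0
    · rw [BB.rho_zero n j hj]
      refine ⟨Function.LeftInverse.injective (g := BB.rho0Inv n) ?_,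
        Function.RightInverse.surjective (g := BB.rho0Inv n) ?_⟩
      · intro v
        rw [← LinearMap.comp_apply, BB.rho0_left_inv]
        rfl
      · intro v
        rw [← LinearMap.comp_apply, BB.rho0_right_inv]
        rfl
    · rw [BB.rho_pos n j hj]
      refine ⟨Function.LeftInverse.injective (g := BB.rhoPInv n (j.val - 1)) ?_,
        Function.RightInverse.surjective (g := BB.rhoPInv n (j.val - 1)) ?_⟩
      · intro v
        rw [← LinearMap.comp_apply, BB.rhoP_left_inv]
        rfl
      · intro v
        rw [← LinearMap.comp_apply, BB.rhoP_right_inv]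
        rfl
  · -- braid relation between σ₁ and σ₂
    intro i j hi hj
    rw [BB.rho_zero n i hi, BB.rho_pos n j (by omega), show j.val - 1 = 0 from by omega]
    exact BB.braid01 n hn
  · -- commutation relations
    intro j k hd
    have hd' : j.val + 2 ≤ k.val ∨ k.val + 2 ≤ j.val := by
      simp [Nat.dist] at hd
      omega
    by_cases hj : j.val = 0
    · rw [BB.rho_zero n j hj, BB.rho_pos n k (by omega)]
      exact BB.comm0P n (k.val - 1) (by omega)
    · by_cases hk : k.val = 0
      · rw [BB.rho_zero n k hk, BB.rho_pos n j (by omega)]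
        exact (BB.comm0P n (j.val - 1) (by omega)).symm
      · rw [BB.rho_pos n j hj, BB.rho_pos n k hk]
        rcases hd' with h | h
        · exact BB.commP n (j.val - 1) (k.val - 1) (by omega)
        · exact (BB.commP n (k.val - 1) (j.val - 1) (by omega)).symm
  · -- braid relations for j ≥ 2
    intro j k h1 h2
    have hk' := k.isLt
    rw [BB.rho_pos n j (by omega), BB.rho_pos n k (by omega),
      show k.val - 1 = (j.val - 1) + 1 from by omega]
    exact BB.braidHigh n (j.val - 1) (by omega)
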